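/- Let G_{τ₁,m} and G_{τ₂,m} be the historical m-hop subgraphs of node triplets of interest τ₁ = ({u,v},w,t) in a temporal hypergraph 𝓔₁ and τ₂ = ({u',v'},w',t') in a temporal hypergraph 𝓔₂, and suppose they are isomorphic via a bijection π with time offset Δ = t' − t. Assume that every state (z,s) reachable in at most m sampling steps from any of the start states (u,t), (v,t), (w,t) within G_{τ₁,m} has a nonempty candidate set, so that the length-m annotated temporal random walk distributions are well-defined probability distributions (the same then holds in G_{τ₂,m}). Let S₁ = S_u ∪ S_v ∪ S_w, where S_u, S_v, S_w each consist of M independently sampled length-m annotated temporal random walks within G_{τ₁,m} starting at (u,t), (v,t), (w,t) respectively, and let S₂ = S_{u'} ∪ S_{v'} ∪ S_{w'} be defined analogously within G_{τ₂,m} with start states (u',t'), (v',t'), (w',t'). Then for every node a of G_{τ₁,m}, the probability that a appears on some walk of S₁ equals the probability that π(a) appears on some walk of S₂. -/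

import Mathlib

/-!
STATEMENT 0: If the historical m-hop subgraphs of two node triplets of interest
τ₁ = ({u,v},w,t) and τ₂ = ({u',v'},w',t') are isomorphic via π with time offset Δ = t'−t,
and all states reachable in at most m sampling steps from the start states have nonempty
candidate sets, then for every node a of G_{τ₁,m}, the probability that a appears on some
walk of S₁ = S_u ∪ S_v ∪ S_w (M independent length-m annotated temporal random walks from
each of (u,t),(v,t),(w,t)) equals the probability that π(a) appears on some walk of
S₂ = S_{u'} ∪ S_{v'} ∪ S_{w'} (sampled analogously in G_{τ₂,m}).
-/

open scoped Classical

namespace HIT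

variable {V V' : Type*}

/-- The candidate set `C(z,s)` of temporal hyperedges containing `z` with timestamp before `s`. -/
noncomputable def cand (H : Finset (Finset V × ℝ)) (z : V) (s : ℝ) :
    Finset (Finset V × ℝ) :=
  H.filter (fun et => z ∈ et.1 ∧ et.2 < s)

/-- The sampling weight `w(e,t;s) = (|e|−1)·exp(α·(s−t))` of a temporal hyperedge. -/
noncomputable def weight (α : ℝ) (s : ℝ) (et : Finset V × ℝ) : ℝ :=
  ((et.1.card : ℝ) - 1) * Real.exp (α * (s - et.2))

/-- An annotated temporal random walk, recorded as the list of steps `((e_l,t_l),z_l)`,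
is valid from current node `z` and current time `s` if each hyperedge is a candidate at the
current state and the next node is drawn from the hyperedge minus the current node. -/
def ValidWalk (H : Finset (Finset V × ℝ)) : V → ℝ → List ((Finset V × ℝ) × V) → Prop
  | _, _, [] => True
  | z, s, (et, z') :: rest =>
      et ∈ H ∧ z ∈ et.1 ∧ et.2 < s ∧ z' ∈ et.1 ∧ z' ≠ z ∧ ValidWalk H z' et.2 rest

/-- The sampling probability `P(W)` of an annotated temporal random walk. -/
noncomputable def walkProb (α : ℝ) (H : Finset (Finset V × ℝ)) :
    V → ℝ → List ((Finset V × ℝ) × V) → ℝ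
  | _, _, [] => 1
  | z, s, (et, z') :: rest =>
      (weight α s et / ∑ et' ∈ cand H z s, weight α s et') *
        (1 / ((et.1.card : ℝ) - 1)) * walkProb α H z' et.2 rest

/-- The state (current node, current time) reached after following a walk. -/
def endState : V → ℝ → List ((Finset V × ℝ) × V) → V × ℝ
  | z, s, [] => (z, s)
  | _, _, (et, z') :: rest => endState z' et.2 rest

/-- The node set of a temporal hypergraph: all nodes covered by its hyperedges. -/
noncomputable def nodes [DecidableEq V] (H : Finset (Finset V × ℝ)) : Finset V :=
  H.biUnion (fun et => et.1)

/-- `π` together with the time offset `Δ` is an isomorphism of temporal hypergraphs from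
`H1` to `H2`: `π` is a bijection from the node set of `H1` onto the node set of `H2`, and
`(ẽ,t̃)` is a temporal hyperedge of `H1` iff `(π(ẽ), t̃+Δ)` is a temporal hyperedge of `H2`. -/
structure IsIso [DecidableEq V] [DecidableEq V'] (π : V → V') (Δ : ℝ)
    (H1 : Finset (Finset V × ℝ)) (H2 : Finset (Finset V' × ℝ)) : Prop where
  injOn : Set.InjOn π (nodes H1 : Set V)
  image_nodes : (nodes H1).image π = nodes H2
  map_mem : ∀ e s, (e, s) ∈ H1 → (e.image π, s + Δ) ∈ H2
  mem_map : ∀ e' s', (e', s') ∈ H2 → ∃ e s, (e, s) ∈ H1 ∧ e' = e.image π ∧ s' = s + Δ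

/-- A length-`m` sequence of sampling steps, each step consisting of a temporal hyperedge
of `H` and a next node. -/
abbrev StepSeq (H : Finset (Finset V × ℝ)) (m : ℕ) := Fin m → ({x // x ∈ H} × V)

/-- Encode a step sequence as a walk (a list of steps). -/
def stepToList {H : Finset (Finset V × ℝ)} {m : ℕ} (f : StepSeq H m) :
    List ((Finset V × ℝ) × V) :=
  List.ofFn fun i => (((f i).1 : Finset V × ℝ), (f i).2)

/-- The probability of sampling a given step sequence as an annotated temporal random walk
starting at `(z0, t0)` (zero if the sequence is not a valid walk). -/
noncomputable def sampleProb (α : ℝ) (H : Finset (Finset V × ℝ)) (z0 : V) (t0 : ℝ)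
    {m : ℕ} (f : StepSeq H m) : ℝ :=
  if ValidWalk H z0 t0 (stepToList f) then walkProb α H z0 t0 (stepToList f) else 0

/-- The node at position `i ∈ {0,…,m}` of a walk given by a step sequence starting at `z0`. -/
def nodeAt {H : Finset (Finset V × ℝ)} {m : ℕ} (z0 : V) (f : StepSeq H m)
    (i : Fin (m + 1)) : V :=
  if h : i = 0 then z0 else (f (i.pred h)).2

/-- An outcome `ω` of the whole sampling experiment consists of `M` step sequences for each
of the three start nodes; the node `a` appears in the sampled walks if it is the node at
some position of some of the `3M` walks. -/
def appearsOn {H : Finset (Finset V × ℝ)} {m M : ℕ} (starts : Fin 3 → V)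
    (ω : Fin 3 → Fin M → StepSeq H m) (a : V) : Prop :=
  ∃ j i p, nodeAt (starts j) (ω j i) p = a

/-- The joint probability of an outcome: the `3M` walks are sampled independently, `M` from
each start node, all with initial time `t0`. -/
noncomputable def jointProb (α : ℝ) (H : Finset (Finset V × ℝ)) (starts : Fin 3 → V)
    (t0 : ℝ) {m M : ℕ} (ω : Fin 3 → Fin M → StepSeq H m) : ℝ :=
  ∏ j, ∏ i, sampleProb α H (starts j) t0 (ω j i)

/-- The probability that the node `a` appears on some walk of `S₁ = S_u ∪ S_v ∪ S_w`. -/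
noncomputable def appearProb [Fintype V] (α : ℝ) (H : Finset (Finset V × ℝ))
    (starts : Fin 3 → V) (t0 : ℝ) (m M : ℕ) (a : V) : ℝ :=
  ∑ ω : Fin 3 → Fin M → StepSeq H m,
    if appearsOn starts ω a then jointProb α H starts t0 ω else 0

/-!
The isomorphism `(π, Δ)` maps each temporal hyperedge to one of the same size with its
timestamp shifted by `Δ`. Hence it maps candidate sets onto candidate sets and preserves the
weights `(|e|-1)·exp(α(s-t))`, which only see sizes and time differences, so it preserves
the probability of every walk. Applied walk by walk, after relabelling the start nodes if
`π` swaps `u` and `v`, it is a bijection between sampling outcomes of positive probability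
that preserves their joint probability and maps the event "`a` appears" onto the event
"`π a` appears".
-/

lemma mem_cand {H : Finset (Finset V × ℝ)} {z : V} {s : ℝ} {et : Finset V × ℝ} :
    et ∈ cand H z s ↔ et ∈ H ∧ z ∈ et.1 ∧ et.2 < s :=
  Finset.mem_filter

lemma validWalk_of_sampleProb_ne_zero {α : ℝ} {H : Finset (Finset V × ℝ)} {z : V} {s : ℝ}
    {m : ℕ} {f : StepSeq H m} (h : sampleProb α H z s f ≠ 0) :
    ValidWalk H z s (stepToList f) := by
  by_contra hf
  exact h (by rw [sampleProb, if_neg hf])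

section Nodes

variable [DecidableEq V] {H : Finset (Finset V × ℝ)}

lemma subset_nodes {et : Finset V × ℝ} (h : et ∈ H) : et.1 ⊆ nodes H :=
  Finset.subset_biUnion_of_mem _ h

lemma mem_nodes_of_mem_cand {z : V} {s : ℝ} {et : Finset V × ℝ} (h : et ∈ cand H z s) :
    z ∈ nodes H :=
  subset_nodes (mem_cand.1 h).1 (mem_cand.1 h).2.1

lemma ValidWalk.forall_mem :
    ∀ {z : V} {s : ℝ} {L : List ((Finset V × ℝ) × V)}, ValidWalk H z s L →
      ∀ x ∈ L, x.1 ∈ H ∧ x.2 ∈ nodes H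
  | _, _, [], _ => by simp
  | _, _, (_, _) :: _, ⟨het, _, _, hz', _, hrest⟩ =>
      List.forall_mem_cons.2 ⟨⟨het, subset_nodes het hz'⟩, ValidWalk.forall_mem hrest⟩

lemma forall_mem_stepToList {m : ℕ} {f : StepSeq H m} (hf : ∀ i, (f i).2 ∈ nodes H) :
    ∀ x ∈ stepToList f, x.1 ∈ H ∧ x.2 ∈ nodes H :=
  List.forall_mem_ofFn_iff.2 fun i => ⟨(f i).1.2, hf i⟩

lemma ValidWalk.stepSeq_mem_nodes {z : V} {s : ℝ} {m : ℕ} {f : StepSeq H m}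
    (h : ValidWalk H z s (stepToList f)) (i : Fin m) : (f i).2 ∈ nodes H :=
  (h.forall_mem _ (List.mem_ofFn.2 ⟨i, rfl⟩)).2

lemma mem_nodes_of_jointProb_ne_zero {α : ℝ} {starts : Fin 3 → V} {t0 : ℝ} {m M : ℕ}
    {ω : Fin 3 → Fin M → StepSeq H m} (h : jointProb α H starts t0 ω ≠ 0) (j : Fin 3)
    (i : Fin M) (k : Fin m) : (ω j i k).2 ∈ nodes H :=
  have hji := Finset.prod_ne_zero_iff.1
    (Finset.prod_ne_zero_iff.1 h j (Finset.mem_univ j)) i (Finset.mem_univ i)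
  (validWalk_of_sampleProb_ne_zero hji).stepSeq_mem_nodes k

lemma nodeAt_mem_nodes {z0 : V} (hz : z0 ∈ nodes H) {m : ℕ} {f : StepSeq H m}
    (hf : ∀ i, (f i).2 ∈ nodes H) (p : Fin (m + 1)) : nodeAt z0 f p ∈ nodes H := by
  unfold nodeAt
  split
  exacts [hz, hf _]

end Nodes

section Iso

variable [DecidableEq V] [DecidableEq V'] {H1 : Finset (Finset V × ℝ)}
  {H2 : Finset (Finset V' × ℝ)} {π : V → V'} {Δ : ℝ}

def mapEdge (π : V → V') (Δ : ℝ) (et : Finset V × ℝ) : Finset V' × ℝ :=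
  (et.1.image π, et.2 + Δ)

def mapStep (π : V → V') (Δ : ℝ) (x : (Finset V × ℝ) × V) : (Finset V' × ℝ) × V' :=
  (mapEdge π Δ x.1, π x.2)

namespace IsIso

lemma mapEdge_mem (hiso : IsIso π Δ H1 H2) {et : Finset V × ℝ} (h : et ∈ H1) :
    mapEdge π Δ et ∈ H2 :=
  hiso.map_mem et.1 et.2 h

lemma exists_mapEdge_eq (hiso : IsIso π Δ H1 H2) {et' : Finset V' × ℝ} (h : et' ∈ H2) :
    ∃ et ∈ H1, mapEdge π Δ et = et' := by
  obtain ⟨e, s, hes, he, hs⟩ := hiso.mem_map et'.1 et'.2 h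
  exact ⟨(e, s), hes, Prod.ext he.symm hs.symm⟩

lemma mem_image_iff (hiso : IsIso π Δ H1 H2) {e : Finset V} (he : e ⊆ nodes H1) {z : V}
    (hz : z ∈ nodes H1) : π z ∈ e.image π ↔ z ∈ e := by
  rw [← Finset.mem_coe, Finset.coe_image]
  exact hiso.injOn.mem_image_iff (Finset.coe_subset.2 he) hz

lemma card_mapEdge (hiso : IsIso π Δ H1 H2) {et : Finset V × ℝ} (h : et ∈ H1) :
    (mapEdge π Δ et).1.card = et.1.card :=
  Finset.card_image_of_injOn (hiso.injOn.mono (Finset.coe_subset.2 (subset_nodes h)))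

lemma injOn_mapEdge (hiso : IsIso π Δ H1 H2) : Set.InjOn (mapEdge π Δ) H1 := by
  intro x hx y hy hxy
  simp only [mapEdge, Prod.mk.injEq, add_left_inj] at hxy
  have hsub : ∀ {et : Finset V × ℝ}, et ∈ H1 → et.1 ∈ ((nodes H1).powerset : Set _) :=
    fun h => Finset.mem_powerset.2 (subset_nodes h)
  exact Prod.ext
    (Finset.image_injOn_powerset_of_injOn hiso.injOn (hsub hx) (hsub hy) hxy.1) hxy.2

lemma weight_mapEdge (hiso : IsIso π Δ H1 H2) (α s : ℝ) {et : Finset V × ℝ} (h : et ∈ H1) :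
    weight α (s + Δ) (mapEdge π Δ et) = weight α s et := by
  rw [weight, hiso.card_mapEdge h, mapEdge, add_sub_add_right_eq_sub, weight]

lemma cand_map (hiso : IsIso π Δ H1 H2) {z : V} (hz : z ∈ nodes H1) (s : ℝ) :
    cand H2 (π z) (s + Δ) = (cand H1 z s).image (mapEdge π Δ) := by
  ext et'
  simp only [Finset.mem_image, mem_cand]
  constructor
  · rintro ⟨h, hze, hs⟩
    obtain ⟨et, het, rfl⟩ := hiso.exists_mapEdge_eq h
    exact ⟨et, ⟨het, (hiso.mem_image_iff (subset_nodes het) hz).1 hze,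
      by simpa [mapEdge] using hs⟩, rfl⟩
  · rintro ⟨et, ⟨het, hze, hs⟩, rfl⟩
    exact ⟨hiso.mapEdge_mem het, Finset.mem_image_of_mem π hze, by simpa [mapEdge] using hs⟩

lemma sum_weight_cand (hiso : IsIso π Δ H1 H2) (α : ℝ) {z : V} (hz : z ∈ nodes H1) (s : ℝ) :
    ∑ et ∈ cand H2 (π z) (s + Δ), weight α (s + Δ) et = ∑ et ∈ cand H1 z s, weight α s et := by
  rw [hiso.cand_map hz, Finset.sum_image (hiso.injOn_mapEdge.mono fun _ h => (mem_cand.1 h).1)]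
  exact Finset.sum_congr rfl fun _ h => hiso.weight_mapEdge α s (mem_cand.1 h).1

lemma validWalk_map_iff (hiso : IsIso π Δ H1 H2) :
    ∀ {L : List ((Finset V × ℝ) × V)} {z : V} {s : ℝ}, z ∈ nodes H1 →
      (∀ x ∈ L, x.1 ∈ H1 ∧ x.2 ∈ nodes H1) →
      (ValidWalk H2 (π z) (s + Δ) (L.map (mapStep π Δ)) ↔ ValidWalk H1 z s L)
  | [], _, _, _, _ => Iff.rfl
  | (et, z') :: rest, z, s, hz, hL => by
    obtain ⟨⟨het, hz'⟩, hrest⟩ := List.forall_mem_cons.1 hL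
    have he := subset_nodes het
    simp only [List.map_cons, mapStep, ValidWalk]
    exact and_congr (iff_of_true (hiso.mapEdge_mem het) het) <|
      and_congr (hiso.mem_image_iff he hz) <| and_congr (add_lt_add_iff_right Δ) <|
      and_congr (hiso.mem_image_iff he hz') <| and_congr (hiso.injOn.ne_iff hz' hz) <|
      hiso.validWalk_map_iff hz' hrest

lemma walkProb_map (hiso : IsIso π Δ H1 H2) (α : ℝ) :
    ∀ {L : List ((Finset V × ℝ) × V)} {z : V} {s : ℝ}, z ∈ nodes H1 →
      (∀ x ∈ L, x.1 ∈ H1 ∧ x.2 ∈ nodes H1) →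
      walkProb α H2 (π z) (s + Δ) (L.map (mapStep π Δ)) = walkProb α H1 z s L
  | [], _, _, _, _ => rfl
  | (et, z') :: rest, z, s, hz, hL => by
    obtain ⟨⟨het, hz'⟩, hrest⟩ := List.forall_mem_cons.1 hL
    simp only [List.map_cons, mapStep, walkProb]
    rw [hiso.weight_mapEdge α s het, hiso.sum_weight_cand α hz s, hiso.card_mapEdge het]
    exact congrArg _ (hiso.walkProb_map α hz' hrest)

def mapSteps (hiso : IsIso π Δ H1 H2) {m : ℕ} (f : StepSeq H1 m) : StepSeq H2 m :=
  fun i => (⟨mapEdge π Δ (f i).1, hiso.mapEdge_mem (f i).1.2⟩, π (f i).2)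

lemma stepToList_mapSteps (hiso : IsIso π Δ H1 H2) {m : ℕ} (f : StepSeq H1 m) :
    stepToList (hiso.mapSteps f) = (stepToList f).map (mapStep π Δ) := by
  simp only [stepToList, List.map_ofFn]
  rfl

lemma sampleProb_mapSteps (hiso : IsIso π Δ H1 H2) (α : ℝ) {z : V} (hz : z ∈ nodes H1)
    (s : ℝ) {m : ℕ} {f : StepSeq H1 m} (hf : ∀ i, (f i).2 ∈ nodes H1) :
    sampleProb α H2 (π z) (s + Δ) (hiso.mapSteps f) = sampleProb α H1 z s f := by
  have hL := forall_mem_stepToList hf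
  simp only [sampleProb, hiso.stepToList_mapSteps, hiso.validWalk_map_iff hz hL,
    hiso.walkProb_map α hz hL]

lemma nodeAt_mapSteps (hiso : IsIso π Δ H1 H2) (z0 : V) {m : ℕ} (f : StepSeq H1 m)
    (p : Fin (m + 1)) : nodeAt (π z0) (hiso.mapSteps f) p = π (nodeAt z0 f p) := by
  unfold nodeAt
  split <;> rfl

lemma mapSteps_injOn (hiso : IsIso π Δ H1 H2) (m : ℕ) :
    Set.InjOn hiso.mapSteps {f : StepSeq H1 m | ∀ i, (f i).2 ∈ nodes H1} := by
  intro f hf g hg hfg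
  funext i
  have hi := congrFun hfg i
  simp only [mapSteps, Prod.mk.injEq, Subtype.mk.injEq] at hi
  exact Prod.ext (Subtype.ext (hiso.injOn_mapEdge (f i).1.2 (g i).1.2 hi.1))
    (hiso.injOn (hf i) (hg i) hi.2)

lemma exists_mapSteps_eq (hiso : IsIso π Δ H1 H2) {m : ℕ} {g : StepSeq H2 m}
    (hg : ∀ i, (g i).2 ∈ nodes H2) :
    ∃ f : StepSeq H1 m, (∀ i, (f i).2 ∈ nodes H1) ∧ hiso.mapSteps f = g := by
  have hstep : ∀ i, ∃ x : {et // et ∈ H1} × V, x.2 ∈ nodes H1 ∧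
      ((⟨mapEdge π Δ x.1, hiso.mapEdge_mem x.1.2⟩, π x.2) : {et // et ∈ H2} × V') = g i := by
    intro i
    obtain ⟨et, het, he⟩ := hiso.exists_mapEdge_eq (g i).1.2
    obtain ⟨z, hz, hzg⟩ := Finset.mem_image.1 (hiso.image_nodes.symm ▸ hg i)
    exact ⟨(⟨et, het⟩, z), hz, Prod.ext (Subtype.ext he) hzg⟩
  choose f hf hfg using hstep
  exact ⟨f, hf, funext hfg⟩

def mapOutcome (hiso : IsIso π Δ H1 H2) (σ : Equiv.Perm (Fin 3)) {m M : ℕ}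
    (ω : Fin 3 → Fin M → StepSeq H1 m) : Fin 3 → Fin M → StepSeq H2 m :=
  fun j i => hiso.mapSteps (ω (σ.symm j) i)

section Outcome

variable (hiso : IsIso π Δ H1 H2) {starts : Fin 3 → V} {starts' : Fin 3 → V'}
  {σ : Equiv.Perm (Fin 3)} {m M : ℕ} {ω : Fin 3 → Fin M → StepSeq H1 m}

lemma jointProb_mapOutcome (α t : ℝ) (hσ : ∀ j, π (starts j) = starts' (σ j))
    (hstarts : ∀ j, starts j ∈ nodes H1) (hω : ∀ j i k, (ω j i k).2 ∈ nodes H1) :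
    jointProb α H2 starts' (t + Δ) (hiso.mapOutcome σ ω) = jointProb α H1 starts t ω := by
  rw [jointProb, ← Equiv.prod_comp σ]
  refine Finset.prod_congr rfl fun j _ => Finset.prod_congr rfl fun i _ => ?_
  rw [mapOutcome, σ.symm_apply_apply, ← hσ]
  exact hiso.sampleProb_mapSteps α (hstarts j) t (hω j i)

lemma appearsOn_mapOutcome_iff (hσ : ∀ j, π (starts j) = starts' (σ j))
    (hstarts : ∀ j, starts j ∈ nodes H1) (hω : ∀ j i k, (ω j i k).2 ∈ nodes H1) {a : V}
    (ha : a ∈ nodes H1) :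
    appearsOn starts' (hiso.mapOutcome σ ω) (π a) ↔ appearsOn starts ω a := by
  rw [appearsOn, ← σ.exists_congr_right]
  refine exists_congr fun j => exists_congr fun i => exists_congr fun p => ?_
  rw [mapOutcome, σ.symm_apply_apply, ← hσ, nodeAt_mapSteps]
  exact hiso.injOn.eq_iff (nodeAt_mem_nodes (hstarts j) (hω j i) p) ha

end Outcome

theorem appearProb_map [Fintype V] [Fintype V'] (hiso : IsIso π Δ H1 H2) (α t : ℝ)
    (m M : ℕ) {starts : Fin 3 → V} {starts' : Fin 3 → V'} (σ : Equiv.Perm (Fin 3))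
    (hσ : ∀ j, π (starts j) = starts' (σ j)) (hstarts : ∀ j, starts j ∈ nodes H1) {a : V}
    (ha : a ∈ nodes H1) :
    appearProb α H1 starts t m M a = appearProb α H2 starts' (t + Δ) m M (π a) := by
  have hterm : ∀ ω : Fin 3 → Fin M → StepSeq H1 m, (∀ j i k, (ω j i k).2 ∈ nodes H1) →
      (if appearsOn starts ω a then jointProb α H1 starts t ω else 0) =
        if appearsOn starts' (hiso.mapOutcome σ ω) (π a) then
          jointProb α H2 starts' (t + Δ) (hiso.mapOutcome σ ω) else 0 := fun ω hω => by
    rw [hiso.appearsOn_mapOutcome_iff hσ hstarts hω ha,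
      hiso.jointProb_mapOutcome α t hσ hstarts hω]
  refine Finset.sum_bij_ne_zero (fun ω _ _ => hiso.mapOutcome σ ω)
    (fun _ _ _ => Finset.mem_univ _) ?inj ?surj
    fun ω _ h => hterm ω (mem_nodes_of_jointProb_ne_zero (ite_ne_right_iff.1 h).2)
  case inj =>
    intro ω₁ _ h₁ ω₂ _ h₂ heq
    funext j i
    have := congrFun (congrFun heq (σ j)) i
    simp only [mapOutcome, Equiv.symm_apply_apply] at this
    exact hiso.mapSteps_injOn m (mem_nodes_of_jointProb_ne_zero (ite_ne_right_iff.1 h₁).2 j i)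
      (mem_nodes_of_jointProb_ne_zero (ite_ne_right_iff.1 h₂).2 j i) this
  case surj =>
    intro ω' _ h'
    have hpre : ∀ j i, ∃ f : StepSeq H1 m, (∀ k, (f k).2 ∈ nodes H1) ∧
        hiso.mapSteps f = ω' (σ j) i := fun j i => hiso.exists_mapSteps_eq
          (mem_nodes_of_jointProb_ne_zero (ite_ne_right_iff.1 h').2 (σ j) i)
    choose ω hω hωeq using hpre
    have hmap : hiso.mapOutcome σ ω = ω' := by
      funext j i
      rw [mapOutcome, hωeq, σ.apply_symm_apply]
    exact ⟨ω, Finset.mem_univ _, by rwa [hterm ω hω, hmap], hmap⟩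

end IsIso

end Iso

lemma exists_perm_comp_eq [DecidableEq V'] (f : V → V') {u v w : V} {u' v' w' : V'}
    (hUV : ({f u, f v} : Finset V') = {u', v'}) (hW : f w = w') :
    ∃ σ : Equiv.Perm (Fin 3), ∀ j, f (![u, v, w] j) = ![u', v', w'] (σ j) := by
  have hUV' : ({f u, f v} : Set V') = {u', v'} := by
    rw [← Finset.coe_pair, hUV, Finset.coe_pair]
  rcases Set.pair_eq_pair_iff.1 hUV' with ⟨hu, hv⟩ | ⟨hu, hv⟩
  · exact ⟨1, fun j => by fin_cases j <;> simp [hu, hv, hW]⟩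
  · exact ⟨Equiv.swap 0 1, fun j => by
      fin_cases j <;> simp [hu, hv, hW, Equiv.swap_apply_of_ne_of_ne]⟩

theorem appearProb_eq_of_iso_general [Fintype V] [Fintype V'] [DecidableEq V] [DecidableEq V']
    (H1 : Finset (Finset V × ℝ)) (H2 : Finset (Finset V' × ℝ))
    (α : ℝ) (m M : ℕ)
    (u v w : V) (u' v' w' : V') (t t' : ℝ) (π : V → V') (Δ : ℝ) (hΔ : Δ = t' - t)
    (hiso : IsIso π Δ H1 H2)
    (hUV : ({π u, π v} : Finset V') = {u', v'}) (hW : π w = w')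
    (hreach : ∀ z0, (z0 = u ∨ z0 = v ∨ z0 = w) →
      ∀ L : List ((Finset V × ℝ) × V), L.length ≤ m → ValidWalk H1 z0 t L →
        (cand H1 (endState z0 t L).1 (endState z0 t L).2).Nonempty)
    (a : V) (ha : a ∈ nodes H1) :
    appearProb α H1 ![u, v, w] t m M a = appearProb α H2 ![u', v', w'] t' m M (π a) := by
  have hstarts : ∀ j, (![u, v, w] : Fin 3 → V) j ∈ nodes H1 := by
    intro j
    obtain ⟨_, het⟩ :=
      hreach (![u, v, w] j) (by fin_cases j <;> simp) [] (Nat.zero_le m) trivial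
    exact mem_nodes_of_mem_cand het
  obtain ⟨σ, hσ⟩ := exists_perm_comp_eq π hUV hW
  rw [show t' = t + Δ by rw [hΔ]; ring]
  exact hiso.appearProb_map α t m M σ hσ hstarts ha

theorem appearProb_eq_of_iso [Fintype V] [Fintype V'] [DecidableEq V] [DecidableEq V']
    (H1 : Finset (Finset V × ℝ)) (H2 : Finset (Finset V' × ℝ))
    (hcard1 : ∀ et ∈ H1, 2 ≤ et.1.card) (hcard2 : ∀ et ∈ H2, 2 ≤ et.1.card)
    (α : ℝ) (hα : 0 ≤ α) (m M : ℕ)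
    (u v w : V) (u' v' w' : V') (t t' : ℝ) (π : V → V') (Δ : ℝ) (hΔ : Δ = t' - t)
    (hiso : IsIso π Δ H1 H2)
    (hUV : ({π u, π v} : Finset V') = {u', v'}) (hW : π w = w')
    (hreach : ∀ z0, (z0 = u ∨ z0 = v ∨ z0 = w) →
      ∀ L : List ((Finset V × ℝ) × V), L.length ≤ m → ValidWalk H1 z0 t L →
        (cand H1 (endState z0 t L).1 (endState z0 t L).2).Nonempty)
    (a : V) (ha : a ∈ nodes H1) :
    appearProb α H1 ![u, v, w] t m M a = appearProb α H2 ![u', v', w'] t' m M (π a) :=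
  appearProb_eq_of_iso_general H1 H2 α m M u v w u' v' w' t t' π Δ hΔ hiso hUV hW hreach a ha

end HIT
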